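/- arXiv:1612.03206 — 2 statements merged into one kernel-verified Lean document; each statement's English description precedes it below -/
import Mathlib

section
/- Let (P_n)_{n∈ℕ} be a sequence of measurable subsets of [0,1], and suppose there exists η ∈ (0,1) such that for every nonempty open subinterval J ⊆ [0,1] there is some n with μ(P_n ∩ J) < η·μ(J), where μ is Lebesgue measure. Then the intersection P = ⋂_n P_n has Lebesgue measure zero, provided each P_n is a countable union of closed intervals (so that P_n ∩ U can be approximated from inside by finite unions of intervals for any open U). -/
open MeasureTheory Filter Set

/-! If `P = ⋂ n, P n` had positive measure, the Lebesgue density theorem would give a point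
`x ∈ (0,1)` and arbitrarily short intervals `J` around it with `μ(P ∩ J) > η·μ(J)`. Since
`P ⊆ P n`, this contradicts the hypothesis for every `n`. -/

theorem Real.exists_Ioo_subset_measure_inter_gt {S U : Set ℝ} (hU : IsOpen U)
    (hSU : volume (S ∩ U) ≠ 0) {c : ENNReal} (hc : c < 1) :
    ∃ a b, a < b ∧ Ioo a b ⊆ U ∧ c * volume (Ioo a b) < volume (S ∩ Ioo a b) := by
  have : (ae (volume.restrict (S ∩ U))).NeBot :=
    ae_neBot.2 fun h ↦ hSU (by simpa using congrArg (· univ) h)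
  have h_dens := ae_restrict_of_ae_restrict_of_subset (inter_subset_left (t := U))
    (Besicovitch.ae_tendsto_measure_inter_div volume S)
  have h_memU : ∀ᵐ x ∂volume.restrict (S ∩ U), x ∈ U :=
    ae_restrict_of_ae_restrict_of_subset inter_subset_right (ae_restrict_mem hU.measurableSet)
  obtain ⟨x, hx_dens, hxU⟩ := (h_dens.and h_memU).exists
  obtain ⟨ε, hε, hεU⟩ := Metric.isOpen_iff.1 hU x hxU
  obtain ⟨r, hr_ratio, hr_pos, hrε⟩ :=
    ((hx_dens.eventually (lt_mem_nhds hc)).and (Ioo_mem_nhdsGT hε)).exists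
  refine ⟨x - r, x + r, by linarith, ?_, ?_⟩
  · rw [← Real.ball_eq_Ioo]
    exact (Metric.ball_subset_ball hrε.le).trans hεU
  · have h_ends : (S ∩ Ioo (x - r) (x + r) : Set ℝ) =ᵐ[volume]
        (S ∩ Icc (x - r) (x + r) : Set ℝ) :=
      (EventuallyEq.refl _ S).inter Ioo_ae_eq_Icc
    rw [measure_congr h_ends, measure_congr Ioo_ae_eq_Icc, ← Real.closedBall_eq_Icc]
    exact (ENNReal.lt_div_iff_mul_lt (Or.inl (by simp [hr_pos]))
      (Or.inl measure_closedBall_lt_top.ne)).1 hr_ratio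

theorem stmt_1_general (P : ℕ → Set ℝ)
    (hPsub : ∀ n, P n ⊆ Set.Icc (0:ℝ) 1)
    (η : ℝ) (hη : η ∈ Set.Ioo (0:ℝ) 1)
    (hyp : ∀ a b : ℝ, 0 ≤ a → a < b → b ≤ 1 →
      ∃ n, volume (P n ∩ Set.Ioo a b) < ENNReal.ofReal η * volume (Set.Ioo a b)) :
    volume (⋂ n, P n) = 0 := by
  by_contra h
  have h_sub : ⋂ n, P n ⊆ Icc 0 1 := (iInter_subset P 0).trans (hPsub 0)
  have h_pos : volume ((⋂ n, P n) ∩ Ioo 0 1) ≠ 0 := by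
    rwa [measure_congr ((ae_eq_refl _).inter Ioo_ae_eq_Icc), inter_eq_left.2 h_sub]
  obtain ⟨a, b, hab, h_ab01, h_dense⟩ := Real.exists_Ioo_subset_measure_inter_gt isOpen_Ioo
    h_pos (ENNReal.ofReal_lt_one.2 hη.2)
  obtain ⟨ha, hb⟩ := (Ioo_subset_Ioo_iff hab).1 h_ab01
  obtain ⟨n, hn⟩ := hyp a b ha hab hb
  exact (h_dense.trans_le (measure_mono (inter_subset_inter_left _ (iInter_subset P n)))).not_gt hn

/-- If each measurable `P n ⊆ [0,1]` is a countable union of closed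
intervals, and there is `η ∈ (0,1)` such that every nonempty open subinterval
`(a,b) ⊆ [0,1]` satisfies `μ(P n ∩ (a,b)) < η·μ((a,b))` for some `n`, then
`⋂ n, P n` is Lebesgue-null. -/
theorem stmt_1 (P : ℕ → Set ℝ) (hPm : ∀ n, MeasurableSet (P n))
    (hPsub : ∀ n, P n ⊆ Set.Icc (0:ℝ) 1)
    (hPclosed : ∀ n, ∃ a b : ℕ → ℝ, P n = ⋃ i, Set.Icc (a i) (b i))
    (η : ℝ) (hη : η ∈ Set.Ioo (0:ℝ) 1)
    (hyp : ∀ a b : ℝ, 0 ≤ a → a < b → b ≤ 1 →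
      ∃ n, volume (P n ∩ Set.Ioo a b) < ENNReal.ofReal η * volume (Set.Ioo a b)) :
    volume (⋂ n, P n) = 0 :=
  stmt_1_general P hPsub η hη hyp
end

section
/- Let f_t(x) = x + t + g(x) be a parameterized family of lifts, where g : ℝ → ℝ is continuous and 1-periodic. If the rotation number t ↦ ρ(f_t) takes an irrational value ρ₀ at t = t₀, then t₀ is the unique parameter with ρ(f_{t₀}) = ρ₀; equivalently, the level set {t : ρ(f_t) = ρ₀} is a single point for each irrational ρ₀. -/
/-!
For `t < t'` the lifts satisfy `f_t x + (t' - t) = f_{t'} x`. Suppose both have the same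
irrational translation number `α`. Dirichlet's theorem gives `q > 0` and an integer `p` with
`0 < |q α - p| < t' - t`. If `q α < p`, a point `x` with `f_t^q x = x + q α` has
`f_{t'}^q x ≥ x + q α + (t' - t) > x + p`, impossible since `τ (f_{t'}^q) = q α < p`.
If `q α > p`, argue symmetrically from a point realising `τ (f_{t'}^q)`.
-/

open Filter

theorem Real.exists_nat_abs_mul_sub_round_lt (ξ : ℝ) {s : ℝ} (hs : 0 < s) :
    ∃ q : ℕ, 0 < q ∧ |q * ξ - round (q * ξ)| < s := by
  obtain ⟨n, hn⟩ := exists_nat_one_div_lt hs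
  obtain ⟨q, hq, -, hqξ⟩ := Real.exists_nat_abs_mul_sub_round_le ξ n.succ_pos
  refine ⟨q, hq, hqξ.trans_lt (lt_of_le_of_lt ?_ hn)⟩
  gcongr
  linarith

namespace CircleDeg1Lift

theorem pow_apply_add_le {f g : CircleDeg1Lift} {s : ℝ} (hs : 0 ≤ s)
    (h : ∀ x, f x + s ≤ g x) {n : ℕ} (hn : n ≠ 0) (x : ℝ) :
    (f ^ n) x + s ≤ (g ^ n) x := by
  obtain ⟨m, rfl⟩ := Nat.exists_eq_succ_of_ne_zero hn
  have hfg : f ≤ g := fun y => by linarith [h y]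
  rw [pow_succ', pow_succ', mul_apply, mul_apply]
  calc f ((f ^ m) x) + s ≤ f ((g ^ m) x) + s := by gcongr; exact pow_mono hfg m x
    _ ≤ g ((g ^ m) x) := h _

theorem translationNumber_lt_of_add_le {f g : CircleDeg1Lift} (hf : Continuous f)
    (hg : Continuous g) (hirr : Irrational (translationNumber f)) {s : ℝ} (hs : 0 < s)
    (h : ∀ x, f x + s ≤ g x) : translationNumber f < translationNumber g := by
  refine (translationNumber_mono fun x => by linarith [h x]).lt_of_ne fun hτ => ?_
  obtain ⟨q, hq, hqs⟩ := Real.exists_nat_abs_mul_sub_round_lt (translationNumber f) hs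
  set p := round (q * translationNumber f)
  have hshift := pow_apply_add_le hs.le h hq.ne'
  have hτf : translationNumber (f ^ q) = q * translationNumber f := translationNumber_pow f q
  have hτg : translationNumber (g ^ q) = q * translationNumber f := by
    rw [translationNumber_pow, hτ]
  rw [abs_lt] at hqs
  have hcont {k : CircleDeg1Lift} (hk : Continuous k) : Continuous (k ^ q) := by
    rw [coe_pow]; exact hk.iterate q
  rcases ((hirr.natCast_mul hq.ne').ne_int p).lt_or_gt with hlt | hgt
  · obtain ⟨x, hx⟩ := (f ^ q).exists_eq_add_translationNumber (hcont hf)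
    have := (g ^ q).map_lt_of_translationNumber_lt_int (hτg ▸ hlt) x
    linarith [hshift x]
  · obtain ⟨x, hx⟩ := (g ^ q).exists_eq_add_translationNumber (hcont hg)
    have := (f ^ q).lt_map_of_int_lt_translationNumber (hτf ▸ hgt) x
    linarith [hshift x]

end CircleDeg1Lift

/-- for the rigid family `f_t(x) = x + t + g(x)` with `g`
continuous and 1-periodic, each irrational rotation number value is attained
at exactly one parameter. -/
theorem stmt_12 (g : ℝ → ℝ) (hg : Continuous g) (hper : ∀ x, g (x + 1) = g x)
    (hhomeo : ∀ t : ℝ, StrictMono fun x => x + t + g x)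
    (ρ : ℝ → ℝ)
    (hρ : ∀ t : ℝ,
      Tendsto (fun n : ℕ => (fun x => x + t + g x)^[n] 0 / n) atTop (nhds (ρ t)))
    (t₀ : ℝ) (hirr : Irrational (ρ t₀)) :
    ∀ t : ℝ, ρ t = ρ t₀ → t = t₀ := by
  let F : ℝ → CircleDeg1Lift := fun t =>
    ⟨⟨fun x => x + t + g x, (hhomeo t).monotone⟩, fun x => by simp only [hper x]; ring⟩
  have hτ (t : ℝ) : (F t).translationNumber = ρ t :=
    (F t).translationNumber_eq_of_tendsto₀ (hρ t)
  have hcont (t : ℝ) : Continuous (F t) := by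
    show Continuous fun x => x + t + g x
    fun_prop
  have hlt {a b : ℝ} (hab : a < b) (ha : Irrational (ρ a)) : ρ a < ρ b := by
    rw [← hτ a] at ha
    rw [← hτ a, ← hτ b]
    refine CircleDeg1Lift.translationNumber_lt_of_add_le (hcont a) (hcont b) ha (sub_pos.2 hab)
      fun x => ?_
    show x + a + g x + (b - a) ≤ x + b + g x
    linarith
  intro t ht
  rcases lt_trichotomy t t₀ with h | rfl | h
  · exact absurd ht (hlt h (ht ▸ hirr)).ne
  · rfl
  · exact absurd ht.symm (hlt h hirr).ne
end
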